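/- For n ≥ 2, the Möbius element of the right comb satisfies M_{1ₙ} = Σ_{i=1}^{n−1} (−1)^{i−1} · (0ᵢ ∨ M_{1_{n−i}}), where 0ᵢ is the left comb with i leaves. -/

import Mathlib

/-!
Write `1ₙ` for the right comb, the top of the Tamari order on trees with `n` leaves. The identity
amounts to `μ(w, 1ₙ) = f w`, where `f | = 1`, `f (0ᵢ ∨ r) = (-1)^(i-1) f r`, and `f` vanishes on
all other trees. As `μ(·, 1ₙ)` is the only function whose sum over every interval `[w, 1ₙ]` is
`δ(w, 1ₙ)`, it suffices to show that `f` has the same interval sums.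

The canopy of a tree (for each internal node, whether its right child is a leaf) can only lose
`true`s along a rotation. The trees on which `f` is nonzero are the Tamari-largest trees of their
canopy class: each is determined by its canopy `c ++ [true]`, lies above every tree of that
canopy, and they are ordered opposite to the pointwise order of canopies. So the trees `z ≥ w`
with `f z ≠ 0` correspond to the words below `c`, where `c ++ [true]` is the canopy of `w`, with
`f z = (-1)^(number of trues)`; this alternating sum vanishes unless `c` has no `true`, that is,
unless `w = 1ₙ`.
-/

open Classical

/-- Planar binary rooted trees. `leaf` is the unique tree `|` with one leaf. -/
inductive PBT : Type
  | leaf : PBT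
  | node : PBT → PBT → PBT
  deriving DecidableEq

/-- Number of leaves of a planar binary rooted tree. -/
def leavesCount : PBT → ℕ
  | .leaf => 1
  | .node l r => leavesCount l + leavesCount r

/-- Graft the tree `w` onto the leftmost (first) leaf of `t`. -/
def graft1 : PBT → PBT → PBT
  | .leaf, w => w
  | .node l r, w => .node (graft1 l w) r

/-- The product `t ⋋ w := w ∘₁ (t ∨ |)`. -/
def lprod (t w : PBT) : PBT := graft1 w (.node t .leaf)

/-- A tree is `⋋`-irreducible if it is not a product of two (nonempty) trees. -/
def Irr (t : PBT) : Prop := ¬ ∃ u w : PBT, t = lprod u w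

/-- One covering move of the Tamari order: a right rotation
`(a ∨ b) ∨ c ↦ a ∨ (b ∨ c)` applied at some internal node. -/
inductive TStep : PBT → PBT → Prop
  | rot (a b c : PBT) : TStep (.node (.node a b) c) (.node a (.node b c))
  | left {a a' : PBT} (c : PBT) : TStep a a' → TStep (.node a c) (.node a' c)
  | right (a : PBT) {c c' : PBT} : TStep c c' → TStep (.node a c) (.node a c')

/-- The Tamari order on planar binary rooted trees: the reflexive transitive
closure of the rotation moves. -/
def tle : PBT → PBT → Prop := Relation.ReflTransGen TStep

/-- The right comb `1ₙ`: `rightComb n` has `n+1` leaves, so `1ₙ = rightComb (n-1)`. -/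
def rightComb : ℕ → PBT
  | 0 => .leaf
  | n + 1 => .node .leaf (rightComb n)

/-- The left comb `0ₙ`: `leftComb n` has `n+1` leaves, so `0ₙ = leftComb (n-1)`. -/
def leftComb : ℕ → PBT
  | 0 => .leaf
  | n + 1 => .node (leftComb n) .leaf

open PBT

theorem leavesCount_pos (t : PBT) : 0 < leavesCount t := by
  induction t with
  | leaf => exact Nat.one_pos
  | node l r ihl _ => simp only [leavesCount]; omega

theorem leavesCount_leftComb (i : ℕ) : leavesCount (leftComb i) = i + 1 := by
  induction i with
  | zero => rfl
  | succ i ih => simp only [leftComb, leavesCount, ih]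

theorem leavesCount_rightComb (k : ℕ) : leavesCount (rightComb k) = k + 1 := by
  induction k with
  | zero => rfl
  | succ k ih => simp only [rightComb, leavesCount, ih]; omega

theorem leftComb_injective : Function.Injective leftComb := fun i j h => by
  simpa [leavesCount_leftComb] using congrArg leavesCount h

theorem tle_node_left {a a' : PBT} (c : PBT) (h : tle a a') : tle (node a c) (node a' c) :=
  h.lift (node · c) fun _ _ => TStep.left c

theorem tle_node_right (a : PBT) {c c' : PBT} (h : tle c c') : tle (node a c) (node a c') :=
  h.lift (node a) fun _ _ => TStep.right a

theorem TStep.ne_leaf {a b : PBT} (h : TStep a b) : b ≠ leaf := by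
  cases h <;> simp

theorem TStep.leavesCount_eq {a b : PBT} (h : TStep a b) : leavesCount a = leavesCount b := by
  induction h <;> simp only [leavesCount] <;> omega

theorem tle.leavesCount_eq {a b : PBT} (h : tle a b) : leavesCount a = leavesCount b := by
  induction h with
  | refl => rfl
  | tail _ hstep ih => exact ih.trans hstep.leavesCount_eq

def leftWeight : PBT → ℕ
  | leaf => 0
  | node l r => leftWeight l + leftWeight r + leavesCount l

theorem TStep.leftWeight_lt {a b : PBT} (h : TStep a b) : leftWeight b < leftWeight a := by
  induction h with
  | rot a b c => have := leavesCount_pos a; simp only [leftWeight, leavesCount]; omega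
  | left c h ih => have := h.leavesCount_eq; simp only [leftWeight]; omega
  | right a h ih => simp only [leftWeight]; omega

theorem tle.leftWeight_lt {a b : PBT} (h : tle a b) (hne : a ≠ b) :
    leftWeight b < leftWeight a := by
  induction h with
  | refl => exact absurd rfl hne
  | @tail b c _ hstep ih =>
    rcases eq_or_ne a b with rfl | h
    · exact hstep.leftWeight_lt
    · exact hstep.leftWeight_lt.trans (ih h)

theorem tle_antisymm {a b : PBT} (hab : tle a b) (hba : tle b a) : a = b := by
  by_contra hne
  exact lt_asymm (hab.leftWeight_lt hne) (hba.leftWeight_lt (Ne.symm hne))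

theorem tle_leftComb_succ_add (i j : ℕ) :
    tle (leftComb (i + j + 1)) (node (leftComb i) (leftComb j)) := by
  induction j with
  | zero => exact .refl
  | succ j ih => exact (tle_node_left leaf ih).tail (TStep.rot _ _ _)

theorem tle_node_leftComb_succ_add (i j : ℕ) (B : PBT) :
    tle (node (leftComb (i + j + 1)) B) (node (leftComb i) (node (leftComb j) B)) :=
  (tle_node_left B (tle_leftComb_succ_add i j)).tail (TStep.rot _ _ _)

def canopy : PBT → List Bool
  | leaf => []
  | node l r => canopy l ++ decide (r = leaf) :: canopy r

theorem length_canopy (t : PBT) : (canopy t).length + 1 = leavesCount t := by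
  induction t with
  | leaf => rfl
  | node l r ihl ihr => simp only [canopy, leavesCount, List.length_append, List.length_cons]; omega

theorem canopy_leftComb (i : ℕ) : canopy (leftComb i) = List.replicate i true := by
  induction i with
  | zero => rfl
  | succ i ih => simp [leftComb, canopy, ih, List.replicate_succ']

theorem exists_canopy_eq_append_true {t : PBT} (ht : t ≠ leaf) :
    ∃ d, canopy t = d ++ [true] := by
  induction t with
  | leaf => exact absurd rfl ht
  | node l r _ ihr =>
    by_cases hr : r = leaf
    · exact ⟨canopy l, by simp [canopy, hr]⟩
    · obtain ⟨d, hd⟩ := ihr hr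
      exact ⟨canopy l ++ false :: d, by simp [canopy, hr, hd]⟩

theorem forall₂_le_trans {α : Type*} [Preorder α] {a b c : List α}
    (hab : List.Forall₂ (· ≤ ·) a b) (hbc : List.Forall₂ (· ≤ ·) b c) :
    List.Forall₂ (· ≤ ·) a c := by
  induction hab generalizing c with
  | nil => exact hbc
  | cons h _ ih =>
    cases hbc with
    | cons h' hbc => exact .cons (h.trans h') (ih hbc)

theorem TStep.canopy_le {a b : PBT} (h : TStep a b) :
    List.Forall₂ (· ≤ ·) (canopy b) (canopy a) := by
  have refl (l : List Bool) : List.Forall₂ (· ≤ ·) l l := List.forall₂_refl l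
  induction h with
  | rot a b c =>
    simp only [canopy, List.append_assoc, List.cons_append]
    exact List.rel_append (refl _) (.cons (by simp) (refl _))
  | left c _ ih => exact List.rel_append ih (refl _)
  | right a h ih =>
    exact List.rel_append (refl _) (.cons (by simp [h.ne_leaf]) ih)

theorem tle.canopy_le {a b : PBT} (h : tle a b) :
    List.Forall₂ (· ≤ ·) (canopy b) (canopy a) := by
  induction h with
  | refl => exact List.forall₂_refl _
  | tail _ hstep ih => exact forall₂_le_trans hstep.canopy_le ih

/-- `maxOfCanopy i c` is the Tamari-largest tree with canopy `replicate i true ++ c ++ [true]`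
(`tle_maxOfCanopy`): a right branch whose left subtrees are left combs. -/
def maxOfCanopy : ℕ → List Bool → PBT
  | i, [] => node (leftComb i) leaf
  | i, true :: c => maxOfCanopy (i + 1) c
  | i, false :: c => node (leftComb i) (maxOfCanopy 0 c)

theorem maxOfCanopy_ne_leaf (i : ℕ) (c : List Bool) : maxOfCanopy i c ≠ leaf := by
  induction c generalizing i with
  | nil => simp [maxOfCanopy]
  | cons b c ih => cases b <;> simp [maxOfCanopy, ih]

theorem maxOfCanopy_replicate_true_append (i j : ℕ) (c : List Bool) :
    maxOfCanopy i (List.replicate j true ++ c) = maxOfCanopy (i + j) c := by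
  induction j generalizing i with
  | zero => rfl
  | succ j ih => rw [List.replicate_succ, List.cons_append, maxOfCanopy, ih]; ring_nf

theorem canopy_maxOfCanopy (i : ℕ) (c : List Bool) :
    canopy (maxOfCanopy i c) = List.replicate i true ++ c ++ [true] := by
  induction c generalizing i with
  | nil => simp [maxOfCanopy, canopy, canopy_leftComb]
  | cons b c ih =>
    cases b
    · simp [maxOfCanopy, canopy, canopy_leftComb, ih, maxOfCanopy_ne_leaf]
    · simp [maxOfCanopy, ih, List.replicate_succ']

theorem maxOfCanopy_zero_injective : Function.Injective (maxOfCanopy 0) := fun c d h => by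
  simpa [canopy_maxOfCanopy] using congrArg canopy h

theorem rightComb_succ (k : ℕ) : rightComb (k + 1) = maxOfCanopy 0 (List.replicate k false) := by
  induction k with
  | zero => rfl
  | succ k ih => rw [rightComb, ih]; rfl

theorem tle_maxOfCanopy_succ_add (i j : ℕ) (c : List Bool) :
    tle (maxOfCanopy (i + j + 1) c) (node (leftComb i) (maxOfCanopy j c)) := by
  induction c generalizing j with
  | nil => exact tle_node_leftComb_succ_add i j leaf
  | cons b c ih =>
    cases b
    · exact tle_node_leftComb_succ_add i j _
    · exact ih (j + 1)

theorem maxOfCanopy_antitone {c d : List Bool} (h : List.Forall₂ (· ≤ ·) c d) (i : ℕ) :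
    tle (maxOfCanopy i d) (maxOfCanopy i c) := by
  induction h generalizing i with
  | nil => exact .refl
  | @cons a b c d hab _ ih =>
    cases a <;> cases b
    · exact tle_node_right _ (ih 0)
    · exact (tle_maxOfCanopy_succ_add i 0 d).trans (tle_node_right _ (ih 0))
    · exact absurd hab (by decide)
    · exact ih (i + 1)

theorem exists_canopy_step_node {l : PBT} (hl : ∀ i, l ≠ leftComb i) (r : PBT) :
    ∃ w, TStep (node l r) w ∧ canopy w = canopy (node l r) := by
  induction l generalizing r with
  | leaf => exact absurd rfl (hl 0)
  | node a b iha _ =>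
    by_cases hb : b = leaf
    · subst hb
      have ha : ∀ i, a ≠ leftComb i := fun i h => hl (i + 1) (by rw [h]; rfl)
      obtain ⟨w, hstep, hcan⟩ := iha ha leaf
      refine ⟨node w r, TStep.left r hstep, ?_⟩
      simp only [canopy] at hcan ⊢
      rw [hcan]
    · exact ⟨_, TStep.rot a b r, by simp [canopy, hb]⟩

theorem node_leftComb_mem_range_maxOfCanopy (i : ℕ) {r : PBT}
    (hr : r = leaf ∨ r ∈ Set.range (maxOfCanopy 0)) :
    node (leftComb i) r ∈ Set.range (maxOfCanopy 0) := by
  rcases hr with rfl | ⟨c, rfl⟩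
  · exact ⟨List.replicate i true, by
      simpa [maxOfCanopy] using maxOfCanopy_replicate_true_append 0 i []⟩
  · exact ⟨List.replicate i true ++ false :: c,
      by simp [maxOfCanopy_replicate_true_append, maxOfCanopy]⟩

theorem exists_canopy_step {w : PBT} (hw : w ∉ Set.range (maxOfCanopy 0)) (hleaf : w ≠ leaf) :
    ∃ w', TStep w w' ∧ canopy w' = canopy w := by
  induction w with
  | leaf => exact absurd rfl hleaf
  | node l r _ ihr =>
    by_cases hl : ∃ i, l = leftComb i
    · obtain ⟨i, rfl⟩ := hl
      obtain ⟨hr, hr'⟩ := not_or.1 (mt (node_leftComb_mem_range_maxOfCanopy i) hw)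
      obtain ⟨r', hstep, hcan⟩ := ihr hr' hr
      exact ⟨_, TStep.right _ hstep, by simp [canopy, hcan, hr, hstep.ne_leaf]⟩
    · exact exists_canopy_step_node (fun i h => hl ⟨i, h⟩) r

theorem tle_maxOfCanopy {w : PBT} {d : List Bool} (h : canopy w = d ++ [true]) :
    tle w (maxOfCanopy 0 d) := by
  induction hlw : leftWeight w using Nat.strong_induction_on generalizing w with
  | _ n ih =>
    by_cases hw : w ∈ Set.range (maxOfCanopy 0)
    · obtain ⟨c, rfl⟩ := hw
      have : c = d := by simpa [canopy_maxOfCanopy] using h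
      exact this ▸ .refl
    · have hleaf : w ≠ leaf := by rintro rfl; simp [canopy] at h
      obtain ⟨w', hstep, hcan⟩ := exists_canopy_step hw hleaf
      exact .head hstep (ih _ (hlw ▸ hstep.leftWeight_lt) (hcan.trans h) rfl)

theorem forall₂_replicate_false_le (d : List Bool) :
    List.Forall₂ (· ≤ ·) (List.replicate d.length false) d := by
  induction d with
  | nil => exact .nil
  | cons b d ih => exact .cons (Bool.false_le b) ih

theorem tle_rightComb (w : PBT) : tle w (rightComb (leavesCount w - 1)) := by
  rcases eq_or_ne w leaf with rfl | hw
  · exact .refl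
  obtain ⟨d, hd⟩ := exists_canopy_eq_append_true hw
  have hlen : leavesCount w - 1 = d.length + 1 := by
    have := length_canopy w
    rw [hd, List.length_append, List.length_singleton] at this
    omega
  rw [hlen, rightComb_succ]
  exact (tle_maxOfCanopy hd).trans (maxOfCanopy_antitone (forall₂_replicate_false_le d) 0)

/-- The function `f` of the proof sketch; `μ(t, 1ₙ) = mobiusTop t` when `t` has `n` leaves. -/
def mobiusTop : PBT → ℤ
  | leaf => 1
  | node l r =>
    if l = leftComb (leavesCount l - 1) then (-1) ^ (leavesCount l - 1) * mobiusTop r else 0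

theorem mobiusTop_node_leftComb (i : ℕ) (r : PBT) :
    mobiusTop (node (leftComb i) r) = (-1) ^ i * mobiusTop r := by
  simp [mobiusTop, leavesCount_leftComb]

theorem mobiusTop_node_of_ne {l : PBT} (hl : ∀ i, l ≠ leftComb i) (r : PBT) :
    mobiusTop (node l r) = 0 := by
  simp [mobiusTop, hl]

theorem mobiusTop_maxOfCanopy (i : ℕ) (c : List Bool) :
    mobiusTop (maxOfCanopy i c) = (-1) ^ (i + c.count true) := by
  induction c generalizing i with
  | nil => simp [maxOfCanopy, mobiusTop_node_leftComb, mobiusTop]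
  | cons b c ih =>
    cases b
    · simp [maxOfCanopy, mobiusTop_node_leftComb, ih, ← pow_add]
    · simp only [maxOfCanopy, ih, List.count_cons_self]; ring_nf

theorem mobiusTop_rightComb (k : ℕ) : mobiusTop (rightComb k) = 1 := by
  cases k with
  | zero => rfl
  | succ k => simp [rightComb_succ, mobiusTop_maxOfCanopy, List.count_replicate]

theorem mem_range_maxOfCanopy_of_mobiusTop_ne_zero {t : PBT} (ht : t ≠ leaf)
    (h : mobiusTop t ≠ 0) : t ∈ Set.range (maxOfCanopy 0) := by
  induction t with
  | leaf => exact absurd rfl ht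
  | node l r _ ihr =>
    obtain ⟨i, rfl⟩ : ∃ i, l = leftComb i := by
      by_contra! hl
      exact h (mobiusTop_node_of_ne hl r)
    rw [mobiusTop_node_leftComb] at h
    refine node_leftComb_mem_range_maxOfCanopy i (or_iff_not_imp_left.2 fun hr => ?_)
    exact ihr hr (right_ne_zero_of_mul h)

theorem eq_rightComb_of_count_canopy {w : PBT} (h : (canopy w).count true = 1) :
    w = rightComb (leavesCount w - 1) := by
  have one_le (t : PBT) (ht : t ≠ leaf) : 1 ≤ (canopy t).count true := by
    obtain ⟨d, hd⟩ := exists_canopy_eq_append_true ht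
    simp [hd]
  induction w with
  | leaf => rfl
  | node l r _ ihr =>
    simp only [canopy, List.count_append, List.count_cons, beq_iff_eq, decide_eq_true_eq] at h
    have hl : l = leaf := by
      by_contra hl
      have := one_le l hl
      by_cases hr : r = leaf
      · simp [hr] at h; omega
      · have := one_le r hr; simp [hr] at h; omega
    subst hl
    by_cases hr : r = leaf
    · subst hr; rfl
    · have hrc := ihr (by simpa [canopy, hr] using h)
      have hlen : leavesCount (node leaf r) - 1 = leavesCount r - 1 + 1 := by
        have := leavesCount_pos r
        simp only [leavesCount]; omega
      rw [hlen, rightComb, ← hrc]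

def wordsBelow : List Bool → Finset (List Bool)
  | [] => {[]}
  | false :: d => (wordsBelow d).image (false :: ·)
  | true :: d => (wordsBelow d).image (false :: ·) ∪ (wordsBelow d).image (true :: ·)

theorem mem_wordsBelow {c d : List Bool} : c ∈ wordsBelow d ↔ List.Forall₂ (· ≤ ·) c d := by
  induction d generalizing c with
  | nil => simp [wordsBelow]
  | cons b d ih =>
    rw [List.forall₂_cons_right_iff]
    cases b <;> simp [wordsBelow, ih, Bool.le_true, eq_comm]

theorem sum_wordsBelow_eq_zero {d : List Bool} (hd : true ∈ d) :
    ∑ c ∈ wordsBelow d, (-1 : ℤ) ^ c.count true = 0 := by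
  induction d with
  | nil => simp at hd
  | cons b d ih =>
    have hinj (a : Bool) : Set.InjOn (a :: ·) (wordsBelow d) :=
      fun _ _ _ _ h => List.cons_injective h
    have hcons (a : Bool) : ∑ c ∈ (wordsBelow d).image (a :: ·), (-1 : ℤ) ^ c.count true
        = (-1) ^ (if a then 1 else 0) * ∑ c ∈ wordsBelow d, (-1 : ℤ) ^ c.count true := by
      rw [Finset.sum_image (hinj a), Finset.mul_sum]
      refine Finset.sum_congr rfl fun c _ => ?_
      cases a <;> simp [pow_succ, mul_comm]
    cases b
    · rw [wordsBelow, hcons, ih (by simpa using hd), mul_zero]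
    · rw [wordsBelow, Finset.sum_union, hcons, hcons]
      · simp
      · refine Finset.disjoint_left.2 fun c h₁ h₂ => ?_
        obtain ⟨_, _, rfl⟩ := Finset.mem_image.1 h₁
        obtain ⟨_, _, h⟩ := Finset.mem_image.1 h₂
        simp at h

def treesUpTo : ℕ → Finset PBT
  | 0 => ∅
  | n + 1 => insert leaf ((treesUpTo n ×ˢ treesUpTo n).image fun p => node p.1 p.2)

theorem mem_treesUpTo {t : PBT} {n : ℕ} (h : leavesCount t ≤ n) : t ∈ treesUpTo n := by
  induction n generalizing t with
  | zero => exact absurd h (leavesCount_pos t).not_ge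
  | succ n ih =>
    cases t with
    | leaf => simp [treesUpTo]
    | node l r =>
      have := leavesCount_pos l
      have := leavesCount_pos r
      simp only [leavesCount] at h
      simp only [treesUpTo, Finset.mem_insert, Finset.mem_image, Finset.mem_product]
      exact .inr ⟨(l, r), ⟨ih (t := l) (by omega), ih (t := r) (by omega)⟩, rfl⟩

noncomputable def tamariIci (w : PBT) : Finset PBT := (treesUpTo (leavesCount w)).filter (tle w)

theorem mem_tamariIci {w z : PBT} : z ∈ tamariIci w ↔ tle w z :=
  ⟨fun h => (Finset.mem_filter.1 h).2,
    fun h => Finset.mem_filter.2 ⟨mem_treesUpTo h.leavesCount_eq.ge, h⟩⟩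

theorem tamariIci_rightComb (k : ℕ) : tamariIci (rightComb k) = {rightComb k} := by
  ext z
  rw [mem_tamariIci, Finset.mem_singleton]
  refine ⟨fun h => (tle_antisymm h ?_).symm, fun h => h ▸ .refl⟩
  simpa [← h.leavesCount_eq, leavesCount_rightComb] using tle_rightComb z

theorem forall₂_append_singleton_iff {α β : Type*} {R : α → β → Prop} {c : List α} {d : List β}
    {a : α} {b : β} : List.Forall₂ R (c ++ [a]) (d ++ [b]) ↔ List.Forall₂ R c d ∧ R a b := by
  rw [← List.forall₂_reverse_iff]
  simp [List.forall₂_reverse_iff, and_comm]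

theorem exists_forall₂_of_tle {w z : PBT} {d : List Bool} (hd : canopy w = d ++ [true])
    (hwz : tle w z) (hz : mobiusTop z ≠ 0) :
    ∃ c, List.Forall₂ (· ≤ ·) c d ∧ maxOfCanopy 0 c = z := by
  have hle := hwz.canopy_le
  have hzleaf : z ≠ leaf := by rintro rfl; simpa [hd, canopy] using hle.length_eq
  obtain ⟨c, rfl⟩ := mem_range_maxOfCanopy_of_mobiusTop_ne_zero hzleaf hz
  rw [canopy_maxOfCanopy, hd, List.replicate_zero, List.nil_append,
    forall₂_append_singleton_iff] at hle
  exact ⟨c, hle.1, rfl⟩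

theorem sum_tamariIci_mobiusTop (w : PBT) :
    ∑ z ∈ tamariIci w, mobiusTop z = if w = rightComb (leavesCount w - 1) then 1 else 0 := by
  split_ifs with hw
  · rw [hw, tamariIci_rightComb, Finset.sum_singleton, mobiusTop_rightComb]
  have hleaf : w ≠ leaf := by rintro rfl; exact hw rfl
  obtain ⟨d, hd⟩ := exists_canopy_eq_append_true hleaf
  have htrue : true ∈ d := by
    by_contra h
    exact hw (eq_rightComb_of_count_canopy (by simp [hd, List.count_eq_zero.2 h]))
  have hsub : (wordsBelow d).image (maxOfCanopy 0) ⊆ tamariIci w := by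
    simp only [Finset.image_subset_iff, mem_wordsBelow, mem_tamariIci]
    exact fun c hc => (tle_maxOfCanopy hd).trans (maxOfCanopy_antitone hc 0)
  have hzero (z) (hz : z ∈ tamariIci w) (hzc : z ∉ (wordsBelow d).image (maxOfCanopy 0)) :
      mobiusTop z = 0 := by
    by_contra h
    obtain ⟨c, hc, rfl⟩ := exists_forall₂_of_tle hd (mem_tamariIci.1 hz) h
    exact hzc (Finset.mem_image_of_mem _ (mem_wordsBelow.2 hc))
  rw [← Finset.sum_subset hsub hzero, Finset.sum_image maxOfCanopy_zero_injective.injOn]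
  simpa [mobiusTop_maxOfCanopy] using sum_wordsBelow_eq_zero htrue

theorem eq_of_sum_tamariIci_eq {g h : PBT → ℤ} {n : ℕ}
    (H : ∀ w, leavesCount w = n → ∑ z ∈ tamariIci w, g z = ∑ z ∈ tamariIci w, h z)
    (w : PBT) (hw : leavesCount w = n) : g w = h w := by
  induction hlw : leftWeight w using Nat.strong_induction_on generalizing w with
  | _ m ih =>
    have hmem : w ∈ tamariIci w := mem_tamariIci.2 .refl
    have hrest : ∑ z ∈ (tamariIci w).erase w, g z = ∑ z ∈ (tamariIci w).erase w, h z := by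
      refine Finset.sum_congr rfl fun z hz => ?_
      obtain ⟨hne, hz⟩ := Finset.mem_erase.1 hz
      have hwz := mem_tamariIci.1 hz
      exact ih _ (hlw ▸ hwz.leftWeight_lt (Ne.symm hne)) z (hwz.leavesCount_eq ▸ hw) rfl
    have := H w hw
    rw [← Finset.add_sum_erase _ _ hmem, ← Finset.add_sum_erase _ _ hmem, hrest] at this
    exact add_right_cancel this

theorem finsum_ite_tle_eq_sum_tamariIci (w : PBT) (g : PBT → ℤ) :
    (∑ᶠ z, if tle w z then g z else 0) = ∑ z ∈ tamariIci w, g z := by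
  rw [finsum_eq_sum_of_support_subset _ (s := tamariIci w)]
  · exact Finset.sum_congr rfl fun z hz => if_pos (mem_tamariIci.1 hz)
  · intro z hz
    by_contra h
    exact hz (if_neg fun hwz => h (mem_tamariIci.2 hwz))

section Mobius

variable (μ : PBT → PBT → ℤ)
    (hμrefl : ∀ t : PBT, μ t t = 1)
    (hμsum : ∀ w t : PBT, tle w t → w ≠ t →
      (∑ᶠ z : PBT, if tle w z ∧ tle z t then μ z t else 0) = 0)
include hμrefl hμsum

theorem sum_tamariIci_mobius (w : PBT) :
    ∑ z ∈ tamariIci w, μ z (rightComb (leavesCount w - 1))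
      = if w = rightComb (leavesCount w - 1) then 1 else 0 := by
  split_ifs with hw
  · obtain ⟨k, rfl⟩ : ∃ k, w = rightComb k := ⟨_, hw⟩
    rw [leavesCount_rightComb, Nat.add_sub_cancel, tamariIci_rightComb, Finset.sum_singleton,
      hμrefl]
  · rw [← hμsum w _ (tle_rightComb w) hw, ← finsum_ite_tle_eq_sum_tamariIci]
    refine finsum_congr fun z => if_congr ⟨fun h => ⟨h, ?_⟩, And.left⟩ rfl rfl
    simpa [h.leavesCount_eq] using tle_rightComb z

theorem mobius_eq_mobiusTop (w : PBT) :
    μ w (rightComb (leavesCount w - 1)) = mobiusTop w := by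
  refine eq_of_sum_tamariIci_eq (g := (μ · _)) (fun v hv => ?_) w rfl
  rw [← hv, sum_tamariIci_mobius μ hμrefl hμsum, sum_tamariIci_mobiusTop]

theorem mobius_rightComb (hμzero : ∀ w t : PBT, ¬ tle w t → μ w t = 0) (k : ℕ) (w : PBT) :
    μ w (rightComb k) = if leavesCount w = k + 1 then mobiusTop w else 0 := by
  split_ifs with hw
  · simpa [hw] using mobius_eq_mobiusTop μ hμrefl hμsum w
  · refine hμzero _ _ fun h => hw ?_
    rw [h.leavesCount_eq, leavesCount_rightComb]

end Mobius

theorem mapDomain_node_apply_leaf {M : Type*} [AddCommMonoid M] (a : PBT) (g : PBT →₀ M) :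
    Finsupp.mapDomain (node a) g leaf = 0 :=
  Finsupp.mapDomain_of_notMem_range _ _ (by simp)

theorem mapDomain_node_apply_node {M : Type*} [AddCommMonoid M] (a : PBT) (g : PBT →₀ M)
    (l r : PBT) : Finsupp.mapDomain (node a) g (node l r) = if l = a then g r else 0 := by
  split_ifs with h
  · subst h
    exact Finsupp.mapDomain_apply (fun _ _ h => (node.inj h).2) g r
  · exact Finsupp.mapDomain_of_notMem_range _ _ (by simp [Ne.symm h])

theorem sum_Icc_ite_leftComb_eq (j n : ℕ) (g : ℕ → ℤ) :
    ∑ i ∈ Finset.Icc 1 n, (if leftComb j = leftComb (i - 1) then g i else 0)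
      = if j + 1 ≤ n then g (j + 1) else 0 := by
  rw [Finset.sum_congr rfl (g := fun i => if i = j + 1 then g i else 0), Finset.sum_ite_eq']
  · simp [Finset.mem_Icc]
  · intro i hi
    have := (Finset.mem_Icc.1 hi).1
    simp only [leftComb_injective.eq_iff]
    exact if_congr ⟨fun h => by omega, fun h => by omega⟩ rfl rfl

/-- For `n ≥ 2`, the Möbius element of the right comb satisfies
`M_{1ₙ} = Σ_{i=1}^{n−1} (−1)^{i−1} · (0ᵢ ∨ M_{1_{n−i}})`,
where `0ᵢ` is the left comb with `i` leaves. -/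
theorem stmt10
    (μ : PBT → PBT → ℤ) (M : PBT → (PBT →₀ ℤ))
    (hM : ∀ t w : PBT, M t w = μ w t)
    (hμrefl : ∀ t : PBT, μ t t = 1)
    (hμzero : ∀ w t : PBT, ¬ tle w t → μ w t = 0)
    (hμsum : ∀ w t : PBT, tle w t → w ≠ t →
      (∑ᶠ z : PBT, if tle w z ∧ tle z t then μ z t else 0) = 0)
    (n : ℕ) (hn : 2 ≤ n) :
    M (rightComb (n - 1)) =
      ∑ i ∈ Finset.Icc 1 (n - 1),
        ((-1 : ℤ)) ^ (i - 1) •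
          Finsupp.mapDomain (fun w => PBT.node (leftComb (i - 1)) w)
            (M (rightComb (n - i - 1))) := by
  have hμ := mobius_rightComb μ hμrefl hμsum hμzero
  ext w
  simp only [Finsupp.finsetSum_apply, Finsupp.smul_apply, smul_eq_mul, hM, hμ]
  cases w with
  | leaf => simp [mapDomain_node_apply_leaf, leavesCount]; omega
  | node l r =>
    simp only [mapDomain_node_apply_node, hM, hμ]
    by_cases hl : ∃ j, l = leftComb j
    · obtain ⟨j, rfl⟩ := hl
      simp only [mul_ite, mul_zero, sum_Icc_ite_leftComb_eq, mobiusTop_node_leftComb, leavesCount,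
        leavesCount_leftComb]
      have := leavesCount_pos r
      split_ifs <;> first | rfl | omega
    · have hl' : ∀ i, l ≠ leftComb i := fun i h => hl ⟨i, h⟩
      simp [mobiusTop_node_of_ne hl', hl']
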